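/- arXiv:1701.03342 — 5 statements merged into one kernel-verified Lean document; each statement's English description precedes it below -/
import Mathlib

section
/- Let S be a finite set and h : S^n → [0,1]. Suppose that for some α ∈ (0,1) and for every i.i.d. distribution q^n(s^n) = ∏ q(s_i) with single-letter distribution q satisfying E_q[l(S)] ≤ Λ (for a given cost function l : S → [0,∞) and constraint Λ > 0), we have ∑_{s^n} q^n(s^n) h(s^n) ≤ α. Then for every s^n ∈ S^n with (1/n)∑_i l(s_i) ≤ Λ, the average of h over all coordinate permutations satisfies (1/n!) ∑_{π ∈ Sym(n)} h(π s^n) ≤ (n+1)^{|S|} · α. -/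
set_option linter.unusedSectionVars false

open Finset

namespace AhlswedeAux

variable {S : Type} [Fintype S] [DecidableEq S] {n : ℕ}

/-- number of coordinates of `f` equal to `s` -/
def cnt (f : Fin n → S) (s : S) : ℕ := (univ.filter fun i => f i = s).card

lemma card_subtype_cnt (f : Fin n → S) (s : S) :
    Fintype.card {i // f i = s} = cnt f s := Fintype.card_subtype _

lemma cnt_comp (f : Fin n → S) (π : Equiv.Perm (Fin n)) (s : S) :
    cnt (f ∘ π) s = cnt f s := by
  rw [← card_subtype_cnt, ← card_subtype_cnt]
  exact Fintype.card_congr (π.subtypeEquiv fun i => Iff.rfl)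

lemma sum_cnt (f : Fin n → S) : ∑ s, cnt f s = n := by
  have := Finset.card_eq_sum_card_fiberwise
    (f := f) (s := (univ : Finset (Fin n))) (t := univ) (fun i _ => mem_univ _)
  simpa [cnt] using this.symm

lemma sum_comp_cnt {M : Type} [AddCommMonoid M] (f : Fin n → S) (F : S → M) :
    ∑ i, F (f i) = ∑ s, cnt f s • F s := by
  rw [← Finset.sum_fiberwise univ f (fun i => F (f i))]
  refine Finset.sum_congr rfl fun s _ => ?_
  rw [Finset.sum_congr rfl (fun i hi => by
    rw [(Finset.mem_filter.mp hi).2] : ∀ i ∈ univ.filter (fun i => f i = s), F (f i) = F s),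
    Finset.sum_const]
  rfl

lemma prod_comp_cnt {M : Type} [CommMonoid M] (f : Fin n → S) (F : S → M) :
    ∏ i, F (f i) = ∏ s, F s ^ cnt f s := by
  rw [← Finset.prod_fiberwise univ f (fun i => F (f i))]
  refine Finset.prod_congr rfl fun s _ => ?_
  rw [Finset.prod_congr rfl (fun i hi => by
    rw [(Finset.mem_filter.mp hi).2] : ∀ i ∈ univ.filter (fun i => f i = s), F (f i) = F s),
    Finset.prod_const]
  rfl

/-- permutations carrying `f` to `g` correspond to families of fiber bijections -/
def permFiberEquiv (f g : Fin n → S) :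
    {π : Equiv.Perm (Fin n) // f ∘ π = g} ≃ ∀ s, ({i // g i = s} ≃ {i // f i = s}) where
  toFun := fun ⟨π, hπ⟩ s =>
    { toFun := fun x => ⟨π x.1, (congrFun hπ x.1).trans x.2⟩
      invFun := fun y => ⟨π.symm y.1, by
        have h1 := congrFun hπ (π.symm y.1)
        rw [Function.comp_apply, Equiv.apply_symm_apply] at h1
        rw [← h1]; exact y.2⟩
      left_inv := fun x => Subtype.ext (π.symm_apply_apply x.1)
      right_inv := fun y => Subtype.ext (π.apply_symm_apply y.1) }
  invFun := fun e => ⟨Equiv.ofFiberEquiv e, funext fun i => Equiv.ofFiberEquiv_map e i⟩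
  left_inv := fun ⟨π, hπ⟩ => Subtype.ext (Equiv.ext fun i => rfl)
  right_inv := fun e => funext fun s => Equiv.ext fun x => by
    obtain ⟨i, hi⟩ := x
    subst hi
    rfl

lemma card_stab (f g : Fin n → S) (hc : ∀ s, cnt g s = cnt f s) :
    Fintype.card {π : Equiv.Perm (Fin n) // f ∘ π = g} = ∏ s, (cnt f s).factorial := by
  rw [Fintype.card_congr (permFiberEquiv f g), Fintype.card_pi]
  refine Finset.prod_congr rfl fun s _ => ?_
  rw [Fintype.card_equiv (Fintype.equivOfCardEq
    (by rw [card_subtype_cnt, card_subtype_cnt, hc]))]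
  rw [card_subtype_cnt, hc]

lemma exists_perm (f g : Fin n → S) (hc : ∀ s, cnt g s = cnt f s) :
    ∃ π : Equiv.Perm (Fin n), f ∘ π = g := by
  have e : ∀ s, {i // g i = s} ≃ {i // f i = s} := fun s =>
    Fintype.equivOfCardEq (by rw [card_subtype_cnt, card_subtype_cnt, hc])
  exact ⟨Equiv.ofFiberEquiv e, funext fun i => Equiv.ofFiberEquiv_map e i⟩

lemma sum_perm_comp {M : Type} [AddCommMonoid M] (f : Fin n → S) (F : (Fin n → S) → M) :
    ∑ π : Equiv.Perm (Fin n), F (f ∘ π)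
      = ∑ b ∈ univ.image (fun π : Equiv.Perm (Fin n) => f ∘ π),
          (∏ s, (cnt f s).factorial) • F b := by
  rw [Finset.sum_comp F (fun π : Equiv.Perm (Fin n) => f ∘ π)]
  refine sum_congr rfl fun b hb => ?_
  obtain ⟨π0, -, rfl⟩ := mem_image.mp hb
  congr 1
  rw [← Fintype.card_subtype, card_stab]
  intro s; exact cnt_comp f π0 s

lemma card_orbit_mul (f : Fin n → S) :
    (univ.image (fun π : Equiv.Perm (Fin n) => f ∘ π)).card * ∏ s, (cnt f s).factorial
      = n.factorial := by
  have := sum_perm_comp f (fun _ => (1 : ℕ))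
  simp only [smul_eq_mul, mul_one, Finset.sum_const, Finset.card_univ,
    Fintype.card_perm, Fintype.card_fin] at this
  omega

lemma factorial_le_pow_mul (M d : ℕ) : (M + d).factorial ≤ (M + d) ^ d * M.factorial := by
  induction d with
  | zero => simp
  | succ d ih =>
    rw [show M + (d + 1) = (M + d) + 1 from rfl, Nat.factorial_succ]
    calc (M + d + 1) * (M + d).factorial ≤ (M + d + 1) * ((M + d) ^ d * M.factorial) :=
          Nat.mul_le_mul_left _ ih
      _ ≤ (M + d + 1) * ((M + d + 1) ^ d * M.factorial) := by
          exact Nat.mul_le_mul_left _ (Nat.mul_le_mul_right _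
            (Nat.pow_le_pow_left (by omega) d))
      _ = (M + d + 1) ^ (d + 1) * M.factorial := by ring

lemma perletter (N M : ℕ) : N ^ M * N.factorial ≤ N ^ N * M.factorial := by
  rcases le_total N M with hle | hle
  · obtain ⟨d, rfl⟩ := Nat.exists_eq_add_of_le hle
    calc N ^ (N + d) * N.factorial = N ^ N * (N.factorial * N ^ d) := by ring
      _ ≤ N ^ N * (N.factorial * (N + 1) ^ d) :=
          Nat.mul_le_mul_left _ (Nat.mul_le_mul_left _ (Nat.pow_le_pow_left (by omega) d))
      _ ≤ N ^ N * (N + d).factorial :=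
          Nat.mul_le_mul_left _ Nat.factorial_mul_pow_le_factorial
  · obtain ⟨d, rfl⟩ := Nat.exists_eq_add_of_le hle
    calc (M + d) ^ M * (M + d).factorial
        ≤ (M + d) ^ M * ((M + d) ^ d * M.factorial) :=
          Nat.mul_le_mul_left _ (factorial_le_pow_mul M d)
      _ = (M + d) ^ (M + d) * M.factorial := by rw [← mul_assoc, ← pow_add]

lemma card_types_le :
    (univ.image (fun f : Fin n → S => cnt f)).card ≤ (n + 1) ^ (Fintype.card S) := by
  have hle : ∀ m ∈ univ.image (fun f : Fin n → S => cnt f), ∀ s, m s ≤ n := by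
    rintro m hm s
    obtain ⟨f, -, rfl⟩ := mem_image.mp hm
    calc cnt f s ≤ (univ : Finset (Fin n)).card := Finset.card_filter_le _ _
      _ = n := by simp
  calc (univ.image (fun f : Fin n → S => cnt f)).card
      ≤ (univ : Finset (S → Fin (n + 1))).card := by
        refine Finset.card_le_card_of_injOn
          (fun m => fun s => (⟨min (m s) n, by omega⟩ : Fin (n + 1)))
          (fun _ _ => mem_univ _) ?_
        intro m1 h1 m2 h2 heq
        funext s
        have := congrFun heq s
        have e1 := hle m1 h1 s
        have e2 := hle m2 h2 s
        simp only [Fin.mk.injEq] at this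
        omega
    _ = (n + 1) ^ (Fintype.card S) := by
        rw [Finset.card_univ, Fintype.card_fun, Fintype.card_fin]

end AhlswedeAux

open Finset AhlswedeAux

/-- Ahlswede's Robustification Technique under a state constraint. -/
theorem ahlswede_RT {S : Type} [Fintype S] (n : ℕ) (hn : 1 ≤ n)
    (h : (Fin n → S) → ℝ) (hh0 : ∀ sn, 0 ≤ h sn) (hh1 : ∀ sn, h sn ≤ 1)
    (l : S → ℝ) (hl : ∀ s, 0 ≤ l s) (Λ : ℝ) (hΛ : 0 < Λ)
    (α : ℝ) (hα0 : 0 < α) (hα1 : α < 1)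
    (hyp : ∀ q : S → ℝ, (∀ s, 0 ≤ q s) → (∑ s, q s = 1) →
      (∑ s, q s * l s ≤ Λ) →
      ∑ sn : Fin n → S, (∏ i, q (sn i)) * h sn ≤ α) :
    ∀ sn : Fin n → S, (1 / n : ℝ) * ∑ i, l (sn i) ≤ Λ →
      (1 / (n.factorial : ℝ)) * ∑ π : Equiv.Perm (Fin n), h (fun i => sn (π i))
        ≤ ((n : ℝ) + 1) ^ (Fintype.card S) * α := by
  classical
  intro sn hsn
  have hn0 : (0 : ℝ) < n := by exact_mod_cast hn
  set Nc : S → ℕ := cnt sn with hNcdef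
  set q : S → ℝ := fun s => (Nc s : ℝ) / n with hqdef
  have hNsum : ∑ s, Nc s = n := sum_cnt sn
  have hq0 : ∀ s, 0 ≤ q s := fun s => by positivity
  have hqsum : ∑ s, q s = 1 := by
    simp only [hqdef, ← Finset.sum_div]
    rw [div_eq_one_iff_eq (ne_of_gt hn0)]
    exact_mod_cast hNsum
  have hql : ∑ s, q s * l s ≤ Λ := by
    have e1 : ∑ i, l (sn i) = ∑ s, (Nc s : ℝ) * l s := by
      rw [sum_comp_cnt sn l]
      exact Finset.sum_congr rfl fun s _ => by rw [nsmul_eq_mul]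
    have e2 : ∑ s, q s * l s = (1 / n : ℝ) * ∑ i, l (sn i) := by
      rw [e1, Finset.mul_sum]
      exact Finset.sum_congr rfl fun s _ => by rw [hqdef]; ring
    rw [e2]; exact hsn
  have hb := hyp q hq0 hqsum hql
  -- orbit
  set O := univ.image (fun π : Equiv.Perm (Fin n) => sn ∘ π) with hOdef
  set c : ℕ := ∏ s, (Nc s).factorial with hcdef
  set p0 : ℝ := ∏ s, q s ^ Nc s with hp0def
  have hOc : O.card * c = n.factorial := card_orbit_mul sn
  have hOne : sn ∈ O :=
    mem_image_of_mem (fun π : Equiv.Perm (Fin n) => sn ∘ ⇑π) (mem_univ 1)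
  have hBpos : (0 : ℝ) < O.card := by
    exact_mod_cast Finset.card_pos.mpr ⟨sn, hOne⟩
  have hcpos : (0 : ℝ) < c := by
    exact_mod_cast Finset.prod_pos fun s _ => Nat.factorial_pos _
  have hp0pos : (0 : ℝ) < p0 := by
    refine Finset.prod_pos fun s _ => ?_
    rcases Nat.eq_zero_or_pos (Nc s) with h0 | h0
    · rw [h0, pow_zero]; norm_num
    · have : (0 : ℝ) < q s := by
        rw [hqdef]
        exact div_pos (by exact_mod_cast h0) hn0
      positivity
  have hfactpos : (0 : ℝ) < (n.factorial : ℝ) := by exact_mod_cast n.factorial_pos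
  -- constant value of the product on the orbit
  have hporb : ∀ b ∈ O, (∏ i, q (b i)) = p0 := by
    intro b hbO
    obtain ⟨π0, -, rfl⟩ := mem_image.mp hbO
    rw [prod_comp_cnt (sn ∘ π0) q]
    exact Finset.prod_congr rfl fun s _ => by rw [cnt_comp]
  -- key1 : p0 * ∑_{b ∈ O} h b ≤ α
  have key1 : p0 * ∑ b ∈ O, h b ≤ α := by
    rw [Finset.mul_sum]
    refine le_trans ?_ hb
    rw [show ∑ b ∈ O, p0 * h b = ∑ b ∈ O, (∏ i, q (b i)) * h b from
      Finset.sum_congr rfl fun b hbO => by rw [hporb b hbO]]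
    refine Finset.sum_le_sum_of_subset_of_nonneg (subset_univ O) fun f _ _ => ?_
    exact mul_nonneg (Finset.prod_nonneg fun i _ => hq0 _) (hh0 f)
  -- types
  set Tm := univ.image (fun f : Fin n → S => cnt f) with hTmdef
  have htot : ∑ f : Fin n → S, ∏ i, q (f i) = 1 := by
    rw [← Fintype.piFinset_univ, ← Finset.prod_univ_sum]
    simp [hqsum]
  have hq_pow : ∀ m : S → ℕ, (∑ s, m s = n) →
      ∏ s, q s ^ m s = (∏ s, (Nc s : ℝ) ^ m s) / (n : ℝ) ^ n := by
    intro m hm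
    calc ∏ s, q s ^ m s = ∏ s, ((Nc s : ℝ) ^ m s / (n : ℝ) ^ m s) := by
          exact Finset.prod_congr rfl fun s _ => by rw [hqdef, div_pow]
      _ = (∏ s, (Nc s : ℝ) ^ m s) / ∏ s, (n : ℝ) ^ m s := by
          rw [Finset.prod_div_distrib]
      _ = (∏ s, (Nc s : ℝ) ^ m s) / (n : ℝ) ^ n := by
          rw [Finset.prod_pow_eq_pow_sum, hm]
  have hcomp : ∀ m ∈ Tm,
      ((univ.filter fun f : Fin n → S => cnt f = m).card : ℝ) * ∏ s, q s ^ m s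
        ≤ (O.card : ℝ) * p0 := by
    intro m hm
    obtain ⟨f0, -, hf0⟩ := mem_image.mp hm
    have hmsum : ∑ s, m s = n := by rw [← hf0]; exact sum_cnt f0
    -- class cardinality
    have horb : (univ.filter fun f : Fin n → S => cnt f = m)
        = univ.image (fun π : Equiv.Perm (Fin n) => f0 ∘ π) := by
      ext b
      simp only [mem_filter, mem_univ, true_and, mem_image]
      constructor
      · intro hcb
        obtain ⟨π, hπ⟩ := exists_perm f0 b (fun s => by rw [hcb, ← hf0])
        exact ⟨π, hπ⟩
      · rintro ⟨π, rfl⟩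
        rw [← hf0]; funext s; exact cnt_comp f0 π s
    set A := (univ.filter fun f : Fin n → S => cnt f = m).card with hAdef
    set cM : ℕ := ∏ s, (m s).factorial with hcMdef
    have hAcM : A * cM = n.factorial := by
      rw [hAdef, horb, hcMdef]
      have := card_orbit_mul f0
      rw [hf0] at this
      exact this
    have hcMpos : (0 : ℝ) < cM := by
      exact_mod_cast Finset.prod_pos fun s _ => Nat.factorial_pos _
    -- per-letter inequality, multiplied out
    have natkey : c * ∏ s, Nc s ^ m s ≤ cM * ∏ s, Nc s ^ Nc s := by
      rw [hcdef, hcMdef, ← Finset.prod_mul_distrib, ← Finset.prod_mul_distrib]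
      refine Finset.prod_le_prod' fun s _ => ?_
      calc (Nc s).factorial * Nc s ^ m s = Nc s ^ m s * (Nc s).factorial := by ring
        _ ≤ Nc s ^ Nc s * (m s).factorial := perletter (Nc s) (m s)
        _ = (m s).factorial * Nc s ^ Nc s := by ring
    have realkey : (c : ℝ) * ∏ s, q s ^ m s ≤ (cM : ℝ) * p0 := by
      rw [hq_pow m hmsum, hp0def,
        show (∏ s, q s ^ Nc s) = (∏ s, (Nc s : ℝ) ^ Nc s) / (n : ℝ) ^ n from
          hq_pow Nc hNsum]
      rw [← mul_div_assoc, ← mul_div_assoc]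
      have hpow : (0 : ℝ) < (n : ℝ) ^ n := by positivity
      rw [div_le_div_iff₀ hpow hpow]
      have hnum : (c : ℝ) * ∏ s, (Nc s : ℝ) ^ m s
          ≤ (cM : ℝ) * ∏ s, (Nc s : ℝ) ^ Nc s := by exact_mod_cast natkey
      nlinarith [hpow]
    -- combine with the two cardinality identities
    have hA' : (A : ℝ) * cM = (n.factorial : ℝ) := by exact_mod_cast hAcM
    have hB' : (O.card : ℝ) * c = (n.factorial : ℝ) := by exact_mod_cast hOc
    have h1 : (A : ℝ) * (∏ s, q s ^ m s) * (cM * c)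
        = (n.factorial : ℝ) * ((c : ℝ) * ∏ s, q s ^ m s) := by
      rw [← hA']; ring
    have h2 : (O.card : ℝ) * p0 * (cM * c)
        = (n.factorial : ℝ) * ((cM : ℝ) * p0) := by
      rw [← hB']; ring
    have h3 : (n.factorial : ℝ) * ((c : ℝ) * ∏ s, q s ^ m s)
        ≤ (n.factorial : ℝ) * ((cM : ℝ) * p0) :=
      mul_le_mul_of_nonneg_left realkey hfactpos.le
    have h4 : (A : ℝ) * (∏ s, q s ^ m s) * (cM * c)
        ≤ (O.card : ℝ) * p0 * (cM * c) := by rw [h1, h2]; exact h3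
    exact le_of_mul_le_mul_right h4 (mul_pos hcMpos hcpos)
  -- total probability, grouped over types
  have hgroup : (1 : ℝ) = ∑ m ∈ Tm,
      ((univ.filter fun f : Fin n → S => cnt f = m).card : ℝ) * ∏ s, q s ^ m s := by
    rw [← htot]
    rw [show ∑ f : Fin n → S, ∏ i, q (f i)
        = ∑ f : Fin n → S, (fun m : S → ℕ => ∏ s, q s ^ m s) (cnt f) from
      Finset.sum_congr rfl fun f _ => prod_comp_cnt f q]
    rw [Finset.sum_comp (fun m : S → ℕ => ∏ s, q s ^ m s)
      (fun f : Fin n → S => cnt f)]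
    exact Finset.sum_congr rfl fun m _ => by rw [nsmul_eq_mul]
  have hone : (1 : ℝ) ≤ ((n : ℝ) + 1) ^ (Fintype.card S) * ((O.card : ℝ) * p0) := by
    have hTmcard : (Tm.card : ℝ) ≤ ((n : ℝ) + 1) ^ (Fintype.card S) := by
      have := card_types_le (S := S) (n := n)
      calc (Tm.card : ℝ) ≤ ((n + 1) ^ (Fintype.card S) : ℕ) := by exact_mod_cast this
        _ = ((n : ℝ) + 1) ^ (Fintype.card S) := by push_cast; ring
    calc (1 : ℝ) = ∑ m ∈ Tm,
          ((univ.filter fun f : Fin n → S => cnt f = m).card : ℝ) * ∏ s, q s ^ m s :=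
          hgroup
      _ ≤ ∑ _m ∈ Tm, (O.card : ℝ) * p0 := Finset.sum_le_sum hcomp
      _ = (Tm.card : ℝ) * ((O.card : ℝ) * p0) := by
          rw [Finset.sum_const, nsmul_eq_mul]
      _ ≤ ((n : ℝ) + 1) ^ (Fintype.card S) * ((O.card : ℝ) * p0) :=
          mul_le_mul_of_nonneg_right hTmcard (mul_pos hBpos hp0pos).le
  -- rewrite the permutation sum
  have hsumπ : ∑ π : Equiv.Perm (Fin n), h (fun i => sn (π i))
      = (c : ℝ) * ∑ b ∈ O, h b := by
    have := sum_perm_comp sn h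
    rw [show (fun π : Equiv.Perm (Fin n) => h (fun i => sn (π i)))
        = (fun π : Equiv.Perm (Fin n) => h (sn ∘ π)) from rfl]
    rw [this, Finset.mul_sum]
    exact Finset.sum_congr rfl fun b _ => by rw [nsmul_eq_mul]
  rw [hsumπ]
  set HO := ∑ b ∈ O, h b with hHOdef
  have hHO0 : 0 ≤ HO := Finset.sum_nonneg fun b _ => hh0 b
  have e1 : (1 / (n.factorial : ℝ)) * ((c : ℝ) * HO) = HO / (O.card : ℝ) := by
    have hB' : (O.card : ℝ) * c = (n.factorial : ℝ) := by exact_mod_cast hOc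
    rw [← hB']
    field_simp
  rw [e1, div_le_iff₀ hBpos]
  nlinarith [mul_le_mul_of_nonneg_left hone hα0.le, hp0pos, hBpos,
    mul_le_mul_of_nonneg_left key1 hp0pos.le]
end

section
/- Consider the arbitrarily varying noisy-typewriter channel W(y|x,s) over X = Y = {0,1,2}, S ∈ {1,2}, defined by Y = X + K·S mod 3 where K ~ Bernoulli(θ) with 0 < θ ≤ 1. If θ ≠ 2/3, then W is not symmetrizable: there exists no conditional distribution J : X → P(S) such that ∑_s W(y|x₁,s) J(s|x₂) = ∑_s W(y|x₂,s) J(s|x₁) for all x₁, x₂ ∈ {0,1,2} and y ∈ {0,1,2}. -/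
open Finset

/-- The arbitrarily varying noisy-typewriter channel `Y = X + K·S mod 3`,
`K ~ Bernoulli(θ)`, with state `s ∈ {1,2}` (encoded as `s : Fin 2` with value `s+1`). -/
noncomputable def Wnt (θ : ℝ) (y x : ZMod 3) (s : Fin 2) : ℝ :=
  (if y = x then 1 - θ else 0) + (if y = x + ((s : ZMod 3) + 1) then θ else 0)

/-- For `θ ≠ 2/3`, the noisy-typewriter AVC is not symmetrizable. -/
theorem noisy_typewriter_nonsymmetrizable (θ : ℝ) (hθ0 : 0 < θ) (hθ1 : θ ≤ 1)
    (hθ : θ ≠ 2 / 3) :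
    ¬ ∃ J : ZMod 3 → Fin 2 → ℝ,
        (∀ x s, 0 ≤ J x s) ∧ (∀ x, ∑ s, J x s = 1) ∧
        (∀ x₁ x₂ y, ∑ s, Wnt θ y x₁ s * J x₂ s = ∑ s, Wnt θ y x₂ s * J x₁ s) := by
  rintro ⟨J, hpos, hsum, hsym⟩
  have h1 := hsym 0 1 1
  have h2 := hsym 1 2 1
  have hs0 := hsum 0
  have hs1 := hsum 1
  have hs2 := hsum 2
  simp [Wnt, Fin.sum_univ_two, show ((0:ZMod 3) + (1+1) = 2) by decide,
    show ((1:ZMod 3) + (1+1) = 0) by decide, show ((2:ZMod 3) + (1+1) = 1) by decide,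
    show ((0:ZMod 3) + ((0:ZMod 3)+1) = 1) by decide,
    show ((1:ZMod 3) + ((0:ZMod 3)+1) = 2) by decide,
    show ((2:ZMod 3) + ((0:ZMod 3)+1) = 0) by decide,
    show ¬((1:ZMod 3) + 1 = 0) by decide, show ¬((1:ZMod 3) = 2) by decide,
    show ¬((2:ZMod 3) = 0) by decide] at h1 h2 hs1 hs0 hs2
  apply hθ
  nlinarith [h1, h2, hs0, hs1, hs2]
end

section
/- For 0 < α < 1/2 and 0 ≤ β ≤ 1/2 fixed, the functions g₁(δ) = 1 − h(α∗β∗δ) and g₂(δ) = h(β∗δ) − h(δ) are monotonically non-increasing in δ on [0, 1/2], where a∗b = a(1−b) + (1−a)b denotes binary convolution and h is the binary entropy function. -/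
/-- `-(x log₂ x)`, with the convention `0 log 0 = 0` (automatic since `log 0 = 0`). -/
noncomputable def negEnt (x : ℝ) : ℝ := -(x * Real.logb 2 x)

/-- The binary entropy function (base 2). -/
noncomputable def binh (p : ℝ) : ℝ := negEnt p + negEnt (1 - p)

/-- Binary convolution `a∗b = a(1-b) + (1-a)b`. -/
def bconv (a b : ℝ) : ℝ := a * (1 - b) + (1 - a) * b

lemma binh_eq (p : ℝ) : binh p = Real.binEntropy p / Real.log 2 := by
  rw [Real.binEntropy_eq_negMulLog_add_negMulLog_one_sub]
  simp [binh, negEnt, Real.logb, Real.negMulLog]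
  ring

lemma bconv_mem {a b : ℝ} (ha0 : 0 ≤ a) (ha : a ≤ 1/2) (hb0 : 0 ≤ b) (hb : b ≤ 1/2) :
    0 ≤ bconv a b ∧ bconv a b ≤ 1/2 := by
  unfold bconv; constructor <;> nlinarith

lemma bconv_mono {a b₁ b₂ : ℝ} (ha : a ≤ 1/2) (h : b₁ ≤ b₂) :
    bconv a b₁ ≤ bconv a b₂ := by
  unfold bconv; nlinarith

lemma bconv_continuous (a : ℝ) : Continuous (fun x => bconv a x) := by
  unfold bconv; fun_prop

lemma hasDerivAt_binEntropy_bconv (β δ : ℝ) (h0 : bconv β δ ≠ 0) (h1 : bconv β δ ≠ 1) :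
    HasDerivAt (fun x => Real.binEntropy (bconv β x))
      ((Real.log (1 - bconv β δ) - Real.log (bconv β δ)) * (1 - 2*β)) δ := by
  have hlin : HasDerivAt (fun x => bconv β x) (1 - 2*β) δ := by
    have h : HasDerivAt (fun x : ℝ => (1 - 2*β) * x + β) (1 - 2*β) δ := by
      simpa using ((hasDerivAt_id δ).const_mul (1 - 2*β)).add_const β
    convert h using 2 with x
    unfold bconv; ring
  exact (Real.hasDerivAt_binEntropy h0 h1).comp δ hlin

/-- The core of part 2, for the natural-log entropy. -/
lemma part2_aux {β : ℝ} (hβ0 : 0 ≤ β) (hβ : β ≤ 1/2) :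
    AntitoneOn (fun δ => Real.binEntropy (bconv β δ) - Real.binEntropy δ)
      (Set.Icc 0 (1/2 : ℝ)) := by
  have hderiv : ∀ x ∈ Set.Ioo (0:ℝ) (1/2),
      HasDerivAt (fun δ => Real.binEntropy (bconv β δ) - Real.binEntropy δ)
        ((Real.log (1 - bconv β x) - Real.log (bconv β x)) * (1 - 2*β)
          - (Real.log (1 - x) - Real.log x)) x := by
    intro x hx
    obtain ⟨hx0, hx1⟩ := hx
    have hm0 : 0 < bconv β x := by unfold bconv; nlinarith
    have hm1 : bconv β x ≤ 1/2 := (bconv_mem hβ0 hβ hx0.le hx1.le).2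
    exact (hasDerivAt_binEntropy_bconv β x hm0.ne' (by linarith)).sub
      (Real.hasDerivAt_binEntropy hx0.ne' (by linarith))
  apply antitoneOn_of_deriv_nonpos (convex_Icc _ _)
  · exact ((Real.binEntropy_continuous.comp (bconv_continuous β)).sub
      Real.binEntropy_continuous).continuousOn
  · rw [interior_Icc]
    exact fun x hx => (hderiv x hx).differentiableAt.differentiableWithinAt
  · rw [interior_Icc]
    intro x hx
    rw [(hderiv x hx).deriv]
    obtain ⟨hx0, hx1⟩ := hx
    set m := bconv β x with hm
    have hm0 : 0 < m := by rw [hm]; unfold bconv; nlinarith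
    have hm1 : m ≤ 1/2 := (bconv_mem hβ0 hβ hx0.le hx1.le).2
    have hxm : x ≤ m := by rw [hm]; unfold bconv; nlinarith
    have hA : Real.log m ≤ Real.log (1 - m) := Real.log_le_log hm0 (by linarith)
    have h1 : Real.log (1 - m) ≤ Real.log (1 - x) := Real.log_le_log (by linarith) (by linarith)
    have h2 : Real.log x ≤ Real.log m := Real.log_le_log hx0 hxm
    nlinarith [sub_nonneg.mpr hA]

/-- For fixed `0 < α < 1/2` and `0 ≤ β ≤ 1/2`, the functions
`g₁(δ) = 1 − h(α∗β∗δ)` and `g₂(δ) = h(β∗δ) − h(δ)` are monotonically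
non-increasing in `δ` on `[0, 1/2]`. -/
theorem g1_g2_antitone (α β : ℝ) (hα0 : 0 < α) (hα : α < 1 / 2)
    (hβ0 : 0 ≤ β) (hβ : β ≤ 1 / 2) :
    (∀ δ₁ δ₂ : ℝ, 0 ≤ δ₁ → δ₁ ≤ δ₂ → δ₂ ≤ 1 / 2 →
        1 - binh (bconv α (bconv β δ₂)) ≤ 1 - binh (bconv α (bconv β δ₁)))
    ∧ (∀ δ₁ δ₂ : ℝ, 0 ≤ δ₁ → δ₁ ≤ δ₂ → δ₂ ≤ 1 / 2 →
        binh (bconv β δ₂) - binh δ₂ ≤ binh (bconv β δ₁) - binh δ₁) := by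
  have hlog2 : (0:ℝ) < Real.log 2 := Real.log_pos (by norm_num)
  constructor
  · intro δ₁ δ₂ h1 h12 h2
    have h1' : δ₁ ≤ 1/2 := h12.trans h2
    have h2' : 0 ≤ δ₂ := h1.trans h12
    obtain ⟨hm10, hm11⟩ := bconv_mem hβ0 hβ h1 h1'
    obtain ⟨hm20, hm21⟩ := bconv_mem hβ0 hβ h2' h2
    obtain ⟨hx10, hx11⟩ := bconv_mem hα0.le hα.le hm10 hm11
    obtain ⟨hx20, hx21⟩ := bconv_mem hα0.le hα.le hm20 hm21
    have hle : bconv α (bconv β δ₁) ≤ bconv α (bconv β δ₂) :=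
      bconv_mono hα.le (bconv_mono hβ h12)
    have hmono := Real.binEntropy_strictMonoOn.monotoneOn
      (a := bconv α (bconv β δ₁)) (b := bconv α (bconv β δ₂))
      ⟨hx10, by norm_num; linarith⟩ ⟨hx20, by norm_num; linarith⟩ hle
    rw [binh_eq, binh_eq]
    have : Real.binEntropy (bconv α (bconv β δ₁)) / Real.log 2
        ≤ Real.binEntropy (bconv α (bconv β δ₂)) / Real.log 2 := by gcongr
    linarith
  · intro δ₁ δ₂ h1 h12 h2
    have h1' : δ₁ ≤ 1/2 := h12.trans h2
    have h2' : 0 ≤ δ₂ := h1.trans h12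
    have := part2_aux hβ0 hβ ⟨h1, h1'⟩ ⟨h2', h2⟩ h12
    simp only at this
    rw [binh_eq, binh_eq, binh_eq, binh_eq]
    rw [div_sub_div_same, div_sub_div_same, div_le_div_iff_of_pos_right hlog2]
    linarith
end

section
/- Consider the binary channel V(y₂|u₂,s) = W(y₂ | u₂ + s mod 2, s) where W(y|x,s) is the binary symmetric broadcast weaker-user channel: Y₂ = X + Z_s + V mod 2 with Z_s ~ Bernoulli(θ_s), V ~ Bernoulli(α) independent, θ₀ < 1/2 < θ₁, α < 1/2. Then V(y₂|u₂,s) is not symmetrizable: there is no conditional distribution J : {0,1} → P({0,1}) with ∑_s V(y₂|u_a,s) J(s|u_b) = ∑_s V(y₂|u_b,s) J(s|u_a) for all u_a, u_b, y₂ ∈ {0,1}. -/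
open Finset

/-- The weaker-user channel `V(y₂|u₂,s) = W(y₂|u₂+s,s)` of the binary symmetric
broadcast channel: `Y₂ = X + Z_s + V mod 2`, `Z_s ~ Bernoulli(θ_s)`,
`V ~ Bernoulli(α)`, so `V(y₂|u₂,s) = α∗θ_s` if `y₂+u₂+s = 1` and `1−α∗θ_s` else. -/
noncomputable def Vbc (α θ₀ θ₁ : ℝ) (y u s : ZMod 2) : ℝ :=
  if y + u + s = 1 then bconv α (if s = 0 then θ₀ else θ₁)
  else 1 - bconv α (if s = 0 then θ₀ else θ₁)

/-- For `θ₀ < 1/2 < θ₁` and `α < 1/2`, the channel `V(y₂|u₂,s)` is not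
symmetrizable. -/
theorem bsbc_weak_user_nonsymmetrizable (α θ₀ θ₁ : ℝ)
    (hα0 : 0 ≤ α) (hα : α < 1 / 2)
    (hθ00 : 0 ≤ θ₀) (hθ0 : θ₀ < 1 / 2) (hθ1 : 1 / 2 < θ₁) (hθ11 : θ₁ ≤ 1) :
    ¬ ∃ J : ZMod 2 → ZMod 2 → ℝ,
        (∀ u s, 0 ≤ J u s) ∧ (∀ u, ∑ s, J u s = 1) ∧
        (∀ uₐ u_b y, ∑ s, Vbc α θ₀ θ₁ y uₐ s * J u_b s
            = ∑ s, Vbc α θ₀ θ₁ y u_b s * J uₐ s) := by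
  rintro ⟨J, hJ0, hJ1, hsym⟩
  have esum : ∀ f : ZMod 2 → ℝ, ∑ s, f s = f 0 + f 1 := fun f => by
    exact Fin.sum_univ_two f
  have h01 := hsym 0 1 0
  rw [esum, esum] at h01
  have hs0 := hJ1 0; rw [esum] at hs0
  have hs1 := hJ1 1; rw [esum] at hs1
  have h00 := hJ0 0 0
  have h01' := hJ0 0 1
  have h10 := hJ0 1 0
  have h11 := hJ0 1 1
  simp only [Vbc, bconv] at h01
  norm_num at h01
  rw [if_neg (by decide : ¬(2:ZMod 2)=1)] at h01
  have hc0 : 0 < 1/2 - (α*(1-θ₀)+(1-α)*θ₀) := by nlinarith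
  have hc1 : 0 < (α*(1-θ₁)+(1-α)*θ₁) - 1/2 := by nlinarith
  rcases le_total (J 1 0 + J 0 0) 1 with h | h
  · nlinarith [mul_nonneg hc0.le (by linarith : (0:ℝ) ≤ J 1 0 + J 0 0),
      mul_nonneg hc1.le (by linarith : (0:ℝ) ≤ J 1 1 + J 0 1 - 1)]
  · nlinarith [mul_nonneg hc1.le (by linarith : (0:ℝ) ≤ J 1 1 + J 0 1),
      mul_nonneg hc0.le (by linarith : (0:ℝ) ≤ J 1 0 + J 0 0 - 1)]
end

section
/- Suppose for each s in a finite index set T (with |T| ≤ |S|^n) we have i.i.d. [0,1]-valued random variables Ω_1(s), ..., Ω_k(s) with E[Ω_j(s)] ≤ ε < α, and take k = n². If n is large enough that 1 + e² ε ≤ e^α, then P( ∃ s ∈ T : (1/k) ∑_{j=1}^k Ω_j(s) ≥ α ) ≤ |S|^n · e^{−α n²}, which tends to 0 as n → ∞. -/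
/-!
Bernstein's trick: for a `[0,1]`-valued variable `X`, convexity of `exp` gives
`𝔼 e^{2X} ≤ 1 + (e² - 1) 𝔼 X ≤ 1 + e² ε ≤ e^α`. Markov's inequality applied to `e^{2 ∑ⱼ Ωⱼ(s)}`
and independence then bound `P(∑ⱼ Ωⱼ(s) ≥ kα)` by `e^{-2kα} (e^α)^k = e^{-αk}`, and a union
bound over the at most `|S|ⁿ` indices `s ∈ T` finishes the proof.
-/

open MeasureTheory ProbabilityTheory Finset Real

lemma Real.exp_mul_le_one_add_mul {x : ℝ} (hx : x ∈ Set.Icc (0 : ℝ) 1) (t : ℝ) :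
    exp (t * x) ≤ 1 + (exp t - 1) * x :=
  calc exp (t * x) = exp ((1 - x) * 0 + x * t) := by ring_nf
    _ ≤ (1 - x) * exp 0 + x * exp t :=
      convexOn_exp.2 (Set.mem_univ _) (Set.mem_univ _) (by linarith [hx.2]) hx.1 (by ring)
    _ = 1 + (exp t - 1) * x := by rw [exp_zero]; ring

namespace ProbabilityTheory

variable {Ω ι : Type*} [MeasurableSpace Ω] {μ : Measure Ω}

lemma mgf_le_one_add_mul_integral [IsProbabilityMeasure μ] {X : Ω → ℝ} (hX : AEMeasurable X μ)
    (hrange : ∀ᵐ ω ∂μ, X ω ∈ Set.Icc (0 : ℝ) 1) (t : ℝ) :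
    mgf X μ t ≤ 1 + (exp t - 1) * μ[X] := by
  have hint : Integrable X μ := Integrable.of_mem_Icc 0 1 hX hrange
  calc mgf X μ t ≤ μ[fun ω => 1 + (exp t - 1) * X ω] :=
        integral_mono_ae (integrable_exp_mul_of_mem_Icc hX hrange)
          ((integrable_const 1).add (hint.const_mul _))
          (hrange.mono fun ω hω => exp_mul_le_one_add_mul hω t)
    _ = 1 + (exp t - 1) * μ[X] := by
        rw [integral_add (integrable_const 1) (hint.const_mul _), integral_const,
          integral_const_mul]
        simp

lemma iIndepFun.measureReal_sum_ge_le {X : ι → Ω → ℝ} (h_indep : iIndepFun X μ)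
    (h_meas : ∀ i, Measurable (X i)) (s : Finset ι) {t : ℝ} (ht : 0 ≤ t)
    (h_int : ∀ i ∈ s, Integrable (fun ω => exp (t * X i ω)) μ) (a : ℝ) :
    μ.real {ω | a ≤ ∑ i ∈ s, X i ω} ≤ exp (-t * a) * ∏ i ∈ s, mgf (X i) μ t := by
  have : IsProbabilityMeasure μ := h_indep.isProbabilityMeasure
  rw [← h_indep.mgf_sum h_meas]
  simpa only [Finset.sum_apply] using
    measure_ge_le_exp_mul_mgf a ht (h_indep.integrable_exp_mul_sum h_meas h_int)

lemma measureReal_mean_ge_le_exp_neg_mul [IsProbabilityMeasure μ] {k : ℕ} {X : Fin k → Ω → ℝ}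
    (h_indep : iIndepFun X μ) (h_meas : ∀ j, Measurable (X j))
    (hrange : ∀ j, ∀ᵐ ω ∂μ, X j ω ∈ Set.Icc (0 : ℝ) 1) {ε α : ℝ} (hE : ∀ j, μ[X j] ≤ ε)
    (hbern : 1 + exp 2 * ε ≤ exp α) :
    μ.real {ω | α ≤ (1 / k : ℝ) * ∑ j, X j ω} ≤ exp (-α * k) := by
  have hmgf (j : Fin k) : mgf (X j) μ 2 ≤ exp α := by
    have hE0 : 0 ≤ μ[X j] := integral_nonneg_of_ae ((hrange j).mono fun ω hω => hω.1)
    have := mul_le_mul_of_nonneg_left (hE j) (exp_pos 2).le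
    linarith [mgf_le_one_add_mul_integral (h_meas j).aemeasurable (hrange j) 2]
  have hevent : {ω | α ≤ (1 / k : ℝ) * ∑ j, X j ω} ⊆ {ω | k * α ≤ ∑ j, X j ω} := by
    intro ω hω
    rcases k.eq_zero_or_pos with rfl | hk
    · simp
    · rwa [Set.mem_ofPred_eq, one_div, le_inv_mul_iff₀ (by exact_mod_cast hk)] at hω
  calc μ.real {ω | α ≤ (1 / k : ℝ) * ∑ j, X j ω}
      ≤ μ.real {ω | k * α ≤ ∑ j, X j ω} := measureReal_mono hevent
    _ ≤ exp (-2 * (k * α)) * ∏ j, mgf (X j) μ 2 :=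
        h_indep.measureReal_sum_ge_le h_meas univ zero_le_two
          (fun j _ => integrable_exp_mul_of_mem_Icc (h_meas j).aemeasurable (hrange j)) _
    _ ≤ exp (-2 * (k * α)) * ∏ _j : Fin k, exp α := by
        gcongr with j
        · exact fun j _ => mgf_nonneg
        · exact hmgf j
    _ = exp (-α * k) := by
        rw [prod_const, card_univ, Fintype.card_fin, ← exp_nat_mul, ← exp_add]
        ring_nf

end ProbabilityTheory

theorem elimination_union_bound_general {Ω ι Salph : Type} [MeasurableSpace Ω] [Fintype Salph]
    (μ : Measure Ω) [IsProbabilityMeasure μ]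
    (n : ℕ) (k : ℕ) (hk : k = n ^ 2)
    (T : Finset ι) (hT : T.card ≤ (Fintype.card Salph) ^ n)
    (Om : ι → Fin k → Ω → ℝ) (hmeas : ∀ s j, Measurable (Om s j))
    (hrange : ∀ s j ω, Om s j ω ∈ Set.Icc (0 : ℝ) 1)
    (hindep : ∀ s, iIndepFun (Om s) μ)
    (ε α : ℝ)
    (hE : ∀ s j, ∫ ω, Om s j ω ∂μ ≤ ε)
    (hbern : 1 + Real.exp 2 * ε ≤ Real.exp α) :
    (μ {ω | ∃ s ∈ T, α ≤ (1 / k : ℝ) * ∑ j, Om s j ω}).toReal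
      ≤ (Fintype.card Salph : ℝ) ^ n * Real.exp (-α * n ^ 2) := by
  have hunion : {ω | ∃ s ∈ T, α ≤ (1 / k : ℝ) * ∑ j, Om s j ω}
      = ⋃ s ∈ T, {ω | α ≤ (1 / k : ℝ) * ∑ j, Om s j ω} := by
    ext ω; simp
  rw [← measureReal_def, hunion]
  calc μ.real (⋃ s ∈ T, {ω | α ≤ (1 / k : ℝ) * ∑ j, Om s j ω})
      ≤ ∑ s ∈ T, μ.real {ω | α ≤ (1 / k : ℝ) * ∑ j, Om s j ω} :=
        measureReal_biUnion_finset_le _ _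
    _ ≤ ∑ _s ∈ T, exp (-α * k) := sum_le_sum fun s _ =>
        measureReal_mean_ge_le_exp_neg_mul (hindep s) (hmeas s)
          (fun j => ae_of_all _ (hrange s j)) (hE s) hbern
    _ = T.card * exp (-α * k) := by rw [sum_const, nsmul_eq_mul]
    _ ≤ (Fintype.card Salph : ℝ) ^ n * exp (-α * n ^ 2) := by
        rw [hk]
        push_cast
        gcongr
        exact_mod_cast hT

/-- Core of Ahlswede's Elimination Technique: Bernstein-trick bound plus a union
bound over at most `|S|ⁿ` state sequences, with `k = n²` codes. -/
theorem elimination_union_bound {Ω ι Salph : Type} [MeasurableSpace Ω] [Fintype Salph]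
    (μ : Measure Ω) [IsProbabilityMeasure μ]
    (n : ℕ) (hn : 1 ≤ n) (k : ℕ) (hk : k = n ^ 2)
    (T : Finset ι) (hT : T.card ≤ (Fintype.card Salph) ^ n)
    (Om : ι → Fin k → Ω → ℝ) (hmeas : ∀ s j, Measurable (Om s j))
    (hrange : ∀ s j ω, Om s j ω ∈ Set.Icc (0 : ℝ) 1)
    (hindep : ∀ s, iIndepFun (Om s) μ)
    (hident : ∀ s j j', IdentDistrib (Om s j) (Om s j') μ μ)
    (ε α : ℝ) (hα : 0 < α) (hεα : ε < α)
    (hE : ∀ s j, ∫ ω, Om s j ω ∂μ ≤ ε)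
    (hbern : 1 + Real.exp 2 * ε ≤ Real.exp α) :
    (μ {ω | ∃ s ∈ T, α ≤ (1 / k : ℝ) * ∑ j, Om s j ω}).toReal
      ≤ (Fintype.card Salph : ℝ) ^ n * Real.exp (-α * n ^ 2) :=
  elimination_union_bound_general μ n k hk T hT Om hmeas hrange hindep ε α hE hbern
end
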